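/- There exists a POVM (M_{(x₀,x₁)})_{(x₀,x₁)∈{0,1}²} of 4×4 matrices such that for every (x₀,x₁) ∈ {0,1}²: Tr(M_{(x₀,x₁)} · F_{(x₀,x₁)}(|0,0⟩⟨0,0|)) ≥ 1/2. Equivalently, the four strong oblivious transfer channels can be discriminated, using the input state |0,0⟩, with maximal error probability at most 1/2. -/

import Mathlib

open Matrix Kronecker ComplexOrder

/-- The square root of a positive semidefinite matrix, as defined in Mathlib (Dec 2024). -/
noncomputable def Matrix.PosSemidef.sqrt {𝕜 : Type*} [RCLike 𝕜] {n : Type*} [Fintype n] [DecidableEq n]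
    {A : Matrix n n 𝕜} (hA : A.PosSemidef) : Matrix n n 𝕜 :=
  (hA.1.eigenvectorUnitary : Matrix n n 𝕜) * diagonal (((↑) : ℝ → 𝕜) ∘ (√·) ∘ hA.1.eigenvalues) *
    (star hA.1.eigenvectorUnitary : Matrix n n 𝕜)

/-- The trace norm `‖A‖₁ = Tr √(Aᴴ A)` of a complex matrix. -/
noncomputable def traceNorm {n : Type*} [Fintype n] [DecidableEq n] (A : Matrix n n ℂ) : ℝ :=
  ((Matrix.posSemidef_conjTranspose_mul_self A).sqrt.trace).re

/-- The trace distance `Δ(ρ,σ) = ‖ρ - σ‖₁ / 2`. -/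
noncomputable def traceDist {n : Type*} [Fintype n] [DecidableEq n] (ρ σ : Matrix n n ℂ) : ℝ :=
  traceNorm (ρ - σ) / 2

open scoped Classical in
/-- Positive semidefinite square root (junk value `0` on non-PSD matrices). -/
noncomputable def psdSqrt {n : Type*} [Fintype n] [DecidableEq n] (A : Matrix n n ℂ) :
    Matrix n n ℂ :=
  if h : A.PosSemidef then h.sqrt else 0

/-- The fidelity `F(ρ,σ) = ‖√ρ √σ‖₁`. -/
noncomputable def fidelity {n : Type*} [Fintype n] [DecidableEq n] (ρ σ : Matrix n n ℂ) : ℝ :=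
  traceNorm (psdSqrt ρ * psdSqrt σ)

/-- A density matrix: positive semidefinite with trace 1. -/
def IsDensityMatrix {n : Type*} [Fintype n] [DecidableEq n] (ρ : Matrix n n ℂ) : Prop :=
  ρ.PosSemidef ∧ ρ.trace = 1

/-- The projector `|b⟩⟨b|` on ℂ². -/
noncomputable def proj (b : Bool) : Matrix Bool Bool ℂ := Matrix.single b b 1

/-- The strong oblivious transfer channel `F_{(x₀,x₁)}`. -/
noncomputable def sotChannel (x₀ x₁ : Bool) (ρ : Matrix (Bool × Bool) (Bool × Bool) ℂ) :
    Matrix (Bool × Bool) (Bool × Bool) ℂ :=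
  ∑ i : Bool, ∑ i' : Bool,
    ρ (i, i') (i, i') •
      (((1/2 : ℂ) • (1 : Matrix Bool Bool ℂ)) ⊗ₖ proj (xor (bif xor i i' then x₁ else x₀) i'))

/-! On input `|0,0⟩` the channel `F_{(x₀,x₁)}` outputs `(I/2) ⊗ |x₀⟩⟨x₀|`. Measuring the second
register therefore reveals `x₀` with certainty, and guessing `x₁` by a fair coin succeeds with
probability exactly `1/2`, whatever the pair `(x₀,x₁)`. -/

lemma proj_posSemidef (b : Bool) : (proj b).PosSemidef := by
  rw [proj, ← diagonal_single]
  exact posSemidef_diagonal_iff.2 fun c => by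
    rw [Pi.single_apply]; split_ifs <;> simp

lemma proj_mul_self (b : Bool) : proj b * proj b = proj b := by
  simp [proj]

lemma trace_proj (b : Bool) : (proj b).trace = 1 := by
  simp [proj]

lemma proj_true_add_proj_false : proj true + proj false = 1 := by
  simpa [proj] using sum_single_one (m := Bool) (α := ℂ)

lemma sotChannel_single (x₀ x₁ i i' : Bool) :
    sotChannel x₀ x₁ (single (i, i') (i, i') 1) =
      ((1/2 : ℂ) • (1 : Matrix Bool Bool ℂ)) ⊗ₖ proj (xor (bif xor i i' then x₁ else x₀) i') := by
  cases i <;> cases i' <;> simp [sotChannel, single_apply]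

noncomputable def firstBitPOVM (x : Bool × Bool) : Matrix (Bool × Bool) (Bool × Bool) ℂ :=
  ((1/2 : ℂ) • (1 : Matrix Bool Bool ℂ)) ⊗ₖ proj x.1

lemma firstBitPOVM_posSemidef (x : Bool × Bool) : (firstBitPOVM x).PosSemidef :=
  (PosSemidef.one.smul (by norm_num [Complex.le_def])).kronecker (proj_posSemidef x.1)

lemma sum_firstBitPOVM : ∑ x, firstBitPOVM x = 1 := by
  simp only [firstBitPOVM, Fintype.sum_prod_type, Finset.sum_const, Finset.card_univ,
    Fintype.card_bool, Fintype.sum_bool, ← smul_add, ← kronecker_add, proj_true_add_proj_false]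
  rw [smul_kronecker, one_kronecker_one, two_nsmul, ← add_smul]
  norm_num

lemma trace_firstBitPOVM_mul (x₀ x₁ : Bool) :
    (firstBitPOVM (x₀, x₁) * (((1/2 : ℂ) • (1 : Matrix Bool Bool ℂ)) ⊗ₖ proj x₀)).trace = 1/2 := by
  rw [firstBitPOVM, ← mul_kronecker_mul, trace_kronecker, proj_mul_self, trace_proj]
  norm_num

/-- The four strong oblivious transfer channels can be discriminated, using the
input state `|0,0⟩`, with maximal error probability at most `1/2`. -/
theorem stmt_15 :
    ∃ M : Bool × Bool → Matrix (Bool × Bool) (Bool × Bool) ℂ,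
      (∀ x, (M x).PosSemidef) ∧ (∑ x : Bool × Bool, M x = 1) ∧
      ∀ x₀ x₁ : Bool,
        ((M (x₀, x₁) *
          sotChannel x₀ x₁
            (Matrix.single (false, false) (false, false) 1)).trace).re ≥ 1/2 := by
  refine ⟨firstBitPOVM, firstBitPOVM_posSemidef, sum_firstBitPOVM, fun x₀ x₁ => ?_⟩
  simp only [sotChannel_single, Bool.xor_false, cond_false]
  rw [trace_firstBitPOVM_mul]
  norm_num
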